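/- Let E and F be real normed vector spaces, f : E → E Lipschitz with constant L_f, h : E → F Lipschitz with constant L_h, and K₁, K₂ : F → E continuous linear maps with a := (1 + ‖K₁‖ · L_h) · L_f < 1. Let (y_t) be a sequence in F, (d_t) a sequence in E with ‖d_t‖ ≤ δ for all t, and suppose the sequences (x_t), (x'_t) in E satisfy x_{t+1} = f(x_t) + K₁(y_t − h(f(x_t))) + d_t and x'_{t+1} = f(x'_t) + K₂(y_t − h(f(x'_t))), with residuals uniformly bounded: ‖y_t − h(f(x'_t))‖ ≤ R for all t. Then limsup_{t→∞} ‖x_t − x'_t‖ ≤ (‖K₁ − K₂‖ · R + δ) / (1 − a). -/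

import Mathlib

/-!
The one-step map `x ↦ f x + K (y - h (f x))` is Lipschitz with constant
`a = (1 + ‖K‖ L_h) L_f`, and swapping the gain `K₁` for `K₂` at the oracle state moves it
by `(K₁ - K₂)` applied to the oracle residual. Hence the error `e t = ‖x t - x' t‖` obeys the
affine recursion `e (t + 1) ≤ a e t + (‖K₁ - K₂‖ R + δ)`, whose solutions approach its fixed
point `(‖K₁ - K₂‖ R + δ) / (1 - a)` geometrically.
-/

open Filter

theorem sub_div_one_sub_le_pow_mul_of_le_mul_add {e : ℕ → ℝ} {a c : ℝ} (ha₀ : 0 ≤ a)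
    (ha₁ : a ≠ 1) (he : ∀ t, e (t + 1) ≤ a * e t + c) (t : ℕ) :
    e t - c / (1 - a) ≤ a ^ t * (e 0 - c / (1 - a)) := by
  induction t with
  | zero => simp
  | succ t ih =>
    have hfix : a * (c / (1 - a)) + c = c / (1 - a) := by
      field_simp [sub_ne_zero.mpr ha₁.symm]
      ring
    calc e (t + 1) - c / (1 - a) ≤ a * (e t - c / (1 - a)) := by linarith [he t]
      _ ≤ a * (a ^ t * (e 0 - c / (1 - a))) := mul_le_mul_of_nonneg_left ih ha₀
      _ = a ^ (t + 1) * (e 0 - c / (1 - a)) := by ring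

theorem limsup_le_div_one_sub_of_le_mul_add {e : ℕ → ℝ} {a c : ℝ} (ha₀ : 0 ≤ a) (ha₁ : a < 1)
    (he : ∀ t, e (t + 1) ≤ a * e t + c) (hcobdd : IsCoboundedUnder (· ≤ ·) atTop e) :
    limsup e atTop ≤ c / (1 - a) := by
  set b : ℕ → ℝ := fun t => a ^ t * (e 0 - c / (1 - a)) + c / (1 - a)
  have hb : Tendsto b atTop (nhds (c / (1 - a))) := by
    simpa using ((tendsto_pow_atTop_nhds_zero_of_lt_one ha₀ ha₁).mul_const
      (e 0 - c / (1 - a))).add_const (c / (1 - a))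
  have heb : ∀ t, e t ≤ b t := fun t => by
    linarith [sub_div_one_sub_le_pow_mul_of_le_mul_add ha₀ ha₁.ne he t]
  calc limsup e atTop ≤ limsup b atTop :=
        limsup_le_limsup (Eventually.of_forall heb) hcobdd hb.isBoundedUnder_le
    _ = c / (1 - a) := hb.limsup_eq

section PredictCorrect

variable {E F : Type*} [NormedAddCommGroup E] [NormedSpace ℝ E]
  [NormedAddCommGroup F] [NormedSpace ℝ F]

def predictCorrect (f : E → E) (h : E → F) (K : F →L[ℝ] E) (y : F) (x : E) : E :=
  f x + K (y - h (f x))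

variable {f : E → E} {h : E → F} {Lf Lh : ℝ}

theorem norm_predictCorrect_sub_le (hLh : 0 ≤ Lh) (hf : ∀ a b : E, ‖f a - f b‖ ≤ Lf * ‖a - b‖)
    (hh : ∀ a b : E, ‖h a - h b‖ ≤ Lh * ‖a - b‖) (K : F →L[ℝ] E) (y : F) (u v : E) :
    ‖predictCorrect f h K y u - predictCorrect f h K y v‖ ≤ (1 + ‖K‖ * Lh) * Lf * ‖u - v‖ := by
  have hsplit : predictCorrect f h K y u - predictCorrect f h K y v
      = (f u - f v) - K (h (f u) - h (f v)) := by
    simp only [predictCorrect, map_sub]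
    abel
  calc ‖predictCorrect f h K y u - predictCorrect f h K y v‖
      ≤ ‖f u - f v‖ + ‖K‖ * ‖h (f u) - h (f v)‖ := by
        rw [hsplit]
        exact (norm_sub_le _ _).trans (add_le_add le_rfl (K.le_opNorm _))
    _ ≤ ‖f u - f v‖ + ‖K‖ * (Lh * ‖f u - f v‖) := by gcongr; exact hh _ _
    _ = (1 + ‖K‖ * Lh) * ‖f u - f v‖ := by ring
    _ ≤ (1 + ‖K‖ * Lh) * (Lf * ‖u - v‖) := by gcongr; exact hf _ _
    _ = (1 + ‖K‖ * Lh) * Lf * ‖u - v‖ := by ring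

theorem predictCorrect_sub_predictCorrect_gain (K₁ K₂ : F →L[ℝ] E) (y : F) (v : E) :
    predictCorrect f h K₁ y v - predictCorrect f h K₂ y v = (K₁ - K₂) (y - h (f v)) := by
  simp only [predictCorrect, sub_apply]
  abel

theorem norm_predictCorrect_sub_predictCorrect_le (hLh : 0 ≤ Lh)
    (hf : ∀ a b : E, ‖f a - f b‖ ≤ Lf * ‖a - b‖) (hh : ∀ a b : E, ‖h a - h b‖ ≤ Lh * ‖a - b‖)
    (K₁ K₂ : F →L[ℝ] E) (y : F) (u v : E) :
    ‖predictCorrect f h K₁ y u - predictCorrect f h K₂ y v‖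
      ≤ (1 + ‖K₁‖ * Lh) * Lf * ‖u - v‖ + ‖K₁ - K₂‖ * ‖y - h (f v)‖ := by
  have hsplit : predictCorrect f h K₁ y u - predictCorrect f h K₂ y v
      = (predictCorrect f h K₁ y u - predictCorrect f h K₁ y v)
        + (predictCorrect f h K₁ y v - predictCorrect f h K₂ y v) := by
    abel
  rw [hsplit, predictCorrect_sub_predictCorrect_gain]
  exact (norm_add_le _ _).trans
    (add_le_add (norm_predictCorrect_sub_le hLh hf hh K₁ y u v) ((K₁ - K₂).le_opNorm _))

end PredictCorrect

/-- Theorem on Local Convergence to Oracle (concrete form): the augmented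
client trajectory `x`, driven by the client gain `K₁` and a bounded
perturbation `d` of size `δ`, converges in steady state to the centralized
oracle trajectory `x'` (driven by the extracted oracle gain `K₂`) up to the
constant `(‖K₁ - K₂‖ * R + δ) / (1 - a)`, provided the contraction condition
`a = (1 + ‖K₁‖ * Lh) * Lf < 1` holds and the oracle residuals are bounded by `R`. -/
theorem local_convergence_to_oracle
    {E F : Type*} [NormedAddCommGroup E] [NormedSpace ℝ E]
    [NormedAddCommGroup F] [NormedSpace ℝ F]
    (f : E → E) (h : E → F) (Lf Lh : ℝ) (hLf : 0 ≤ Lf) (hLh : 0 ≤ Lh)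
    (hf : ∀ a b : E, ‖f a - f b‖ ≤ Lf * ‖a - b‖)
    (hh : ∀ a b : E, ‖h a - h b‖ ≤ Lh * ‖a - b‖)
    (K₁ K₂ : F →L[ℝ] E)
    (ha : (1 + ‖K₁‖ * Lh) * Lf < 1)
    (y : ℕ → F) (d : ℕ → E) (δ : ℝ) (hd : ∀ t, ‖d t‖ ≤ δ)
    (x x' : ℕ → E)
    (hx : ∀ t, x (t + 1) = f (x t) + K₁ (y t - h (f (x t))) + d t)
    (hx' : ∀ t, x' (t + 1) = f (x' t) + K₂ (y t - h (f (x' t))))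
    (R : ℝ) (hR : ∀ t, ‖y t - h (f (x' t))‖ ≤ R) :
    limsup (fun t => ‖x t - x' t‖) atTop ≤
      (‖K₁ - K₂‖ * R + δ) / (1 - (1 + ‖K₁‖ * Lh) * Lf) := by
  have hstep : ∀ t, ‖x (t + 1) - x' (t + 1)‖
      ≤ (1 + ‖K₁‖ * Lh) * Lf * ‖x t - x' t‖ + (‖K₁ - K₂‖ * R + δ) := fun t => by
    have hsplit : x (t + 1) - x' (t + 1) = (predictCorrect f h K₁ (y t) (x t)
        - predictCorrect f h K₂ (y t) (x' t)) + d t := by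
      rw [hx, hx', predictCorrect, predictCorrect]
      abel
    calc ‖x (t + 1) - x' (t + 1)‖
        ≤ (1 + ‖K₁‖ * Lh) * Lf * ‖x t - x' t‖ + ‖K₁ - K₂‖ * ‖y t - h (f (x' t))‖ + ‖d t‖ := by
          rw [hsplit]
          exact (norm_add_le _ _).trans (add_le_add
            (norm_predictCorrect_sub_predictCorrect_le hLh hf hh K₁ K₂ _ _ _) le_rfl)
      _ ≤ (1 + ‖K₁‖ * Lh) * Lf * ‖x t - x' t‖ + (‖K₁ - K₂‖ * R + δ) := by
          linarith [hd t, mul_le_mul_of_nonneg_left (hR t) (norm_nonneg (K₁ - K₂))]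
  exact limsup_le_div_one_sub_of_le_mul_add (by positivity) ha hstep
    (isCoboundedUnder_le_of_le atTop fun t => norm_nonneg _)
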